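/- arXiv:2505.16563 — 3 statements merged into one kernel-verified Lean document; each statement's English description precedes it below -/
import Mathlib

section
/- Let H be a real inner product space, S a nonempty finite set, and g : S → H with g(x) ≠ 0 for all x ∈ S. Among all sampling distributions P on S, the variance V[g(X)/(|S|·P(X))] of the importance-weighted estimator (X having law P) is minimized by P*(x) = ‖g(x)‖ / Σ_{x'∈S} ‖g(x')‖, and the minimum value equals ((1/|S|)·Σ_{x∈S} ‖g(x)‖)² − ‖ḡ‖², where ḡ = (1/|S|)·Σ_{x∈S} g(x). -/
/-!
Writing `n = |S|`, the estimator has mean `ḡ` for every admissible `P`, and its second moment is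
`n⁻² ∑ ‖g x‖² / P x`. By Sedrakyan's form of Cauchy–Schwarz, `(∑ ‖g x‖)² ≤ (∑ P x) ∑ ‖g x‖² / P x`,
and choosing `P ∝ ‖g‖` is exactly the equality case.
-/

noncomputable def isVar {H : Type*} [NormedAddCommGroup H] [InnerProductSpace ℝ H]
    {S : Type*} [Fintype S] (g : S → H) (P : S → ℝ) : ℝ :=
  (∑ x, P x * ‖((Fintype.card S : ℝ) * P x)⁻¹ • g x‖ ^ 2)
    - ‖∑ x, P x • (((Fintype.card S : ℝ) * P x)⁻¹ • g x)‖ ^ 2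

/-- At `p = 0` both sides vanish (as `0⁻¹ = 0`), so zero weights are harmless where `v = 0`. -/
lemma smul_inv_mul_smul_eq_inv_smul {K V : Type*} [Field K] [AddCommGroup V] [Module K V]
    (c p : K) {v : V} (hp : p = 0 → v = 0) : p • ((c * p)⁻¹ • v) = c⁻¹ • v := by
  rcases eq_or_ne p 0 with rfl | hp0
  · simp [hp rfl]
  · rw [smul_smul, mul_inv, mul_left_comm, mul_inv_cancel₀ hp0, mul_one]

lemma mul_norm_inv_mul_smul_sq {V : Type*} [NormedAddCommGroup V] [NormedSpace ℝ V]
    (c p : ℝ) (v : V) : p * ‖(c * p)⁻¹ • v‖ ^ 2 = (c⁻¹) ^ 2 * (‖v‖ ^ 2 / p) := by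
  rcases eq_or_ne p 0 with rfl | hp0
  · simp
  · rw [norm_smul, Real.norm_eq_abs, mul_pow, sq_abs, mul_inv, mul_pow]
    field_simp

lemma isVar_eq {H : Type*} [NormedAddCommGroup H] [InnerProductSpace ℝ H]
    {S : Type*} [Fintype S] (g : S → H) (P : S → ℝ) (hP : ∀ x, P x = 0 → g x = 0) :
    isVar g P = ((Fintype.card S : ℝ)⁻¹) ^ 2 * ∑ x, ‖g x‖ ^ 2 / P x
      - ‖(Fintype.card S : ℝ)⁻¹ • ∑ x, g x‖ ^ 2 := by
  simp only [isVar, smul_inv_mul_smul_eq_inv_smul _ _ (hP _), mul_norm_inv_mul_smul_sq,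
    ← Finset.mul_sum, ← Finset.smul_sum]

lemma sum_sq_div_div_sum_eq_sq_sum {K S : Type*} [Field K] [Fintype S] (a : S → K) :
    ∑ x, a x ^ 2 / (a x / ∑ y, a y) = (∑ x, a x) ^ 2 := by
  have hterm (x : S) : a x ^ 2 / (a x / ∑ y, a y) = a x * ∑ y, a y := by
    rw [div_div_eq_mul_div, sq, mul_div_right_comm, mul_self_div_self]
  rw [Finset.sum_congr rfl fun x _ => hterm x, ← Finset.sum_mul, sq]

theorem optimal_sample_level_selection_general
    {H : Type*} [NormedAddCommGroup H] [InnerProductSpace ℝ H]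
    {S : Type*} [Fintype S]
    (g : S → H)
    (gbar : H) (hgbar : gbar = (Fintype.card S : ℝ)⁻¹ • ∑ x, g x) :
    (∀ P : S → ℝ, (∀ x, 0 < P x) → (∑ x, P x = 1) →
      ((Fintype.card S : ℝ)⁻¹ * ∑ x, ‖g x‖) ^ 2 - ‖gbar‖ ^ 2 ≤ isVar g P) ∧
    isVar g (fun x => ‖g x‖ / ∑ x', ‖g x'‖)
      = ((Fintype.card S : ℝ)⁻¹ * ∑ x, ‖g x‖) ^ 2 - ‖gbar‖ ^ 2 := by
  subst hgbar
  constructor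
  · intro P hP hPsum
    rw [isVar_eq g P fun x hx => absurd hx (hP x).ne', mul_pow]
    have titu := Finset.sq_sum_div_le_sum_sq_div Finset.univ (fun x => ‖g x‖) fun x _ => hP x
    rw [hPsum, div_one] at titu
    gcongr
  · have hP : ∀ x, ‖g x‖ / ∑ x', ‖g x'‖ = 0 → g x = 0 := by
      intro x hx
      rcases div_eq_zero_iff.mp hx with hgx | hsum
      · exact norm_eq_zero.mp hgx
      · exact norm_eq_zero.mp <| (Finset.sum_eq_zero_iff_of_nonneg fun y _ => norm_nonneg (g y)).mp
          hsum x (Finset.mem_univ x)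
    rw [isVar_eq g _ hP, sum_sq_div_div_sum_eq_sq_sum, mul_pow]

/-- Lemma 1 (Optimal Sample-Level Selection): sampling proportionally to the gradient
norm minimizes the variance of the importance-weighted estimator, with minimum value
`((1/|S|)·∑‖g‖)² - ‖ḡ‖²`. -/
theorem optimal_sample_level_selection
    {H : Type*} [NormedAddCommGroup H] [InnerProductSpace ℝ H]
    {S : Type*} [Fintype S] [Nonempty S]
    (g : S → H) (hg : ∀ x, g x ≠ 0)
    (gbar : H) (hgbar : gbar = (Fintype.card S : ℝ)⁻¹ • ∑ x, g x) :
    (∀ P : S → ℝ, (∀ x, 0 < P x) → (∑ x, P x = 1) →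
      ((Fintype.card S : ℝ)⁻¹ * ∑ x, ‖g x‖) ^ 2 - ‖gbar‖ ^ 2 ≤ isVar g P) ∧
    isVar g (fun x => ‖g x‖ / ∑ x', ‖g x'‖)
      = ((Fintype.card S : ℝ)⁻¹ * ∑ x, ‖g x‖) ^ 2 - ‖gbar‖ ^ 2 :=
  optimal_sample_level_selection_general g gbar hgbar
end

section
/- Let H be a real inner product space, S a nonempty finite set partitioned into nonempty classes S_y for y in a finite set Y. For each class y fix a sampling distribution P_y on S_y and an integer b_y ≥ 1, let X_{y,1}, …, X_{y,b_y} be random elements of S_y each with law P_y, with the entire family {X_{y,i}} mutually independent, and define the batch gradient estimator G = Σ_{y∈Y} (|S_y|/|S|)·(1/b_y)·Σ_{i=1}^{b_y} g(X_{y,i})/(|S_y|·P_y(X_{y,i})), where g : S → H. Then V[G] = Σ_{y∈Y} α_y·(β_y − γ_y), where α_y = |S_y|²/(|S|²·b_y), β_y = Σ_{x∈S_y} ‖g(x)‖²/(|S_y|²·P_y(x)), and γ_y = ‖(1/|S_y|)·Σ_{x∈S_y} g(x)‖². -/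
/-!
Under a product of probability weights the coordinates are independent, so the covariance of
functions of two distinct coordinates vanishes and the variance of `∑ j, F j (ω j)` is the sum
of the variances of the `F j`. Applied once across the classes and once across the `b y` i.i.d.
draws of a class (so that the batch mean divides the variance by `b y`), this reduces the
theorem to the variance of a single importance-weighted draw `g x / (|S_y| P_y x)`, whose second
moment is `β_y` and whose mean is `|S_y|⁻¹ ∑ g`.
-/

open Finset RealInnerProductSpace

noncomputable def weightedVariance {α E : Type*} [Fintype α] [SeminormedAddCommGroup E]
    [Module ℝ E] (p : α → ℝ) (f : α → E) : ℝ :=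
  ∑ a, p a * ‖f a‖ ^ 2 - ‖∑ a, p a • f a‖ ^ 2

section ProductWeights

variable {ι : Type*} [Fintype ι] [DecidableEq ι] {Ω : ι → Type*}

theorem prod_mulSingle_apply (j : ι) (φ : Ω j → ℝ) (ω : ∀ i, Ω i) :
    ∏ i, (Pi.mulSingle j φ : ∀ i, Ω i → ℝ) i (ω i) = φ (ω j) := by
  rw [Fintype.prod_eq_single j fun i hi => by simp [Pi.mulSingle_eq_of_ne hi],
    Pi.mulSingle_eq_same]

variable [∀ i, Fintype (Ω i)] {q : ∀ i, Ω i → ℝ}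

theorem sum_prod_mul_prod (q φ : ∀ i, Ω i → ℝ) :
    ∑ ω : ∀ i, Ω i, (∏ i, q i (ω i)) * ∏ i, φ i (ω i) = ∏ i, ∑ x, q i x * φ i x := by
  simp_rw [← prod_mul_distrib]
  exact (Fintype.prod_sum fun i x => q i x * φ i x).symm

theorem sum_prod_eq_one (hq : ∀ i, ∑ x, q i x = 1) : ∑ ω : ∀ i, Ω i, ∏ i, q i (ω i) = 1 := by
  rw [← Fintype.prod_sum q, prod_eq_one fun i _ => hq i]

theorem sum_prod_mul_apply (hq : ∀ i, ∑ x, q i x = 1) (j : ι) (φ : Ω j → ℝ) :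
    ∑ ω : ∀ i, Ω i, (∏ i, q i (ω i)) * φ (ω j) = ∑ x, q j x * φ x := by
  have h := sum_prod_mul_prod q (Pi.mulSingle j φ : ∀ i, Ω i → ℝ)
  rw [Fintype.prod_eq_single j fun i hi => by simp [Pi.mulSingle_eq_of_ne hi, hq],
    Pi.mulSingle_eq_same] at h
  simpa only [prod_mulSingle_apply] using h

theorem sum_prod_mul_apply_mul_apply (hq : ∀ i, ∑ x, q i x = 1) {j k : ι} (hjk : j ≠ k)
    (φ : Ω j → ℝ) (ψ : Ω k → ℝ) :
    ∑ ω : ∀ i, Ω i, (∏ i, q i (ω i)) * (φ (ω j) * ψ (ω k))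
      = (∑ x, q j x * φ x) * ∑ y, q k y * ψ y := by
  have h := sum_prod_mul_prod q (Pi.mulSingle j φ * Pi.mulSingle k ψ : ∀ i, Ω i → ℝ)
  simp only [Pi.mul_apply, prod_mul_distrib, prod_mulSingle_apply] at h
  rw [h, Fintype.prod_eq_mul j k hjk fun i hi => by
    simp [Pi.mulSingle_eq_of_ne hi.1, Pi.mulSingle_eq_of_ne hi.2, hq]]
  simp [Pi.mulSingle_eq_of_ne hjk, Pi.mulSingle_eq_of_ne hjk.symm]

variable {M : Type*} [AddCommGroup M] [Module ℝ M]

theorem sum_prod_smul_apply (hq : ∀ i, ∑ x, q i x = 1) (j : ι) (F : Ω j → M) :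
    ∑ ω : ∀ i, Ω i, (∏ i, q i (ω i)) • F (ω j) = ∑ x, q j x • F x := by
  classical
  have hF (ω : ∀ i, Ω i) : F (ω j) = ∑ x, (if ω j = x then 1 else 0 : ℝ) • F x := by simp
  simp_rw [hF, smul_sum, smul_smul]
  rw [sum_comm]
  refine sum_congr rfl fun x _ => ?_
  rw [← sum_smul, sum_prod_mul_apply hq j fun y => if y = x then 1 else 0]
  simp

theorem sum_prod_smul_apply_apply (hq : ∀ i, ∑ x, q i x = 1) {j k : ι} (hjk : j ≠ k)
    (Φ : Ω j → Ω k → M) :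
    ∑ ω : ∀ i, Ω i, (∏ i, q i (ω i)) • Φ (ω j) (ω k) = ∑ x, ∑ y, (q j x * q k y) • Φ x y := by
  classical
  have hΦ (ω : ∀ i, Ω i) : Φ (ω j) (ω k) = ∑ x, ∑ y,
      ((if ω j = x then 1 else 0) * (if ω k = y then 1 else 0) : ℝ) • Φ x y := by
    simp
  simp_rw [hΦ, smul_sum, smul_smul]
  rw [sum_comm]
  refine sum_congr rfl fun x _ => ?_
  rw [sum_comm]
  refine sum_congr rfl fun y _ => ?_
  rw [← sum_smul, sum_prod_mul_apply_mul_apply hq hjk (fun a => if a = x then 1 else 0)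
    fun b => if b = y then 1 else 0]
  simp

variable {E : Type*} [SeminormedAddCommGroup E] [InnerProductSpace ℝ E]

theorem sum_prod_mul_inner_apply_apply (hq : ∀ i, ∑ x, q i x = 1) {j k : ι} (hjk : j ≠ k)
    (F : Ω j → E) (G : Ω k → E) :
    ∑ ω : ∀ i, Ω i, (∏ i, q i (ω i)) * ⟪F (ω j), G (ω k)⟫
      = ⟪∑ x, q j x • F x, ∑ y, q k y • G y⟫ := by
  have h := sum_prod_smul_apply_apply hq hjk fun x y => ⟪F x, G y⟫
  simp only [smul_eq_mul] at h
  simp only [h, sum_inner, inner_sum, real_inner_smul_left, real_inner_smul_right]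
  exact sum_comm.trans (sum_congr rfl fun _ _ => sum_congr rfl fun _ _ => by ring)

theorem sum_prod_mul_inner_sub_inner (hq : ∀ i, ∑ x, q i x = 1) (F : ∀ j, Ω j → E) (j k : ι) :
    ∑ ω : ∀ i, Ω i, (∏ i, q i (ω i)) * ⟪F j (ω j), F k (ω k)⟫
        - ⟪∑ x, q j x • F j x, ∑ y, q k y • F k y⟫
      = if j = k then weightedVariance (q j) (F j) else 0 := by
  split_ifs with hjk
  · subst hjk
    simp only [real_inner_self_eq_norm_sq]
    rw [sum_prod_mul_apply hq j fun x => ‖F j x‖ ^ 2]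
    rfl
  · rw [sum_prod_mul_inner_apply_apply hq hjk, sub_self]

theorem weightedVariance_sum_apply (hq : ∀ i, ∑ x, q i x = 1) (F : ∀ j, Ω j → E) :
    weightedVariance (fun ω : ∀ i, Ω i => ∏ i, q i (ω i)) (fun ω => ∑ j, F j (ω j))
      = ∑ j, weightedVariance (q j) (F j) := by
  have hmean : ∑ ω : ∀ i, Ω i, (∏ i, q i (ω i)) • ∑ j, F j (ω j) = ∑ j, ∑ x, q j x • F j x := by
    simp_rw [smul_sum]
    rw [sum_comm]
    exact sum_congr rfl fun j _ => sum_prod_smul_apply hq j (F j)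
  have hsq (v : ι → E) : ‖∑ j, v j‖ ^ 2 = ∑ j, ∑ k, ⟪v j, v k⟫ := by
    rw [← real_inner_self_eq_norm_sq, sum_inner]
    simp_rw [inner_sum]
  calc weightedVariance (fun ω : ∀ i, Ω i => ∏ i, q i (ω i)) (fun ω => ∑ j, F j (ω j))
      = ∑ j, ∑ k, (∑ ω : ∀ i, Ω i, (∏ i, q i (ω i)) * ⟪F j (ω j), F k (ω k)⟫
          - ⟪∑ x, q j x • F j x, ∑ y, q k y • F k y⟫) := by
        simp only [weightedVariance, hmean, hsq, mul_sum, sum_sub_distrib]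
        rw [sum_comm]
        exact congrArg (· - _) (sum_congr rfl fun _ _ => sum_comm)
    _ = ∑ j, weightedVariance (q j) (F j) := by
        simp [sum_prod_mul_inner_sub_inner hq F]

end ProductWeights

section Scaling

variable {α E : Type*} [Fintype α] [SeminormedAddCommGroup E] [NormedSpace ℝ E]

theorem weightedVariance_smul (p : α → ℝ) (r : ℝ) (f : α → E) :
    weightedVariance p (fun a => r • f a) = r ^ 2 * weightedVariance p f := by
  simp only [weightedVariance, smul_comm (p _) r, ← smul_sum, norm_smul, Real.norm_eq_abs,
    mul_pow, sq_abs, mul_sub, mul_sum]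
  congr 1
  exact sum_congr rfl fun _ _ => by ring

theorem weightedVariance_inv_mul_smul {p : α → ℝ} (hp : ∀ a, p a ≠ 0) (c : ℝ) (g : α → E) :
    weightedVariance p (fun a => (c * p a)⁻¹ • g a)
      = ∑ a, ‖g a‖ ^ 2 / (c ^ 2 * p a) - ‖c⁻¹ • ∑ a, g a‖ ^ 2 := by
  have hmean (a : α) : p a • (c * p a)⁻¹ • g a = c⁻¹ • g a := by
    rw [smul_smul, mul_inv, mul_left_comm, mul_inv_cancel₀ (hp a), mul_one]
  have hsq (a : α) : p a * ‖(c * p a)⁻¹ • g a‖ ^ 2 = ‖g a‖ ^ 2 / (c ^ 2 * p a) := by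
    rw [norm_smul, norm_inv, Real.norm_eq_abs, mul_pow, inv_pow, sq_abs]
    field_simp
  simp only [weightedVariance, hmean, hsq, ← smul_sum]

end Scaling

theorem weightedVariance_sampleMean {α E : Type*} [Fintype α] [SeminormedAddCommGroup E]
    [InnerProductSpace ℝ E] {p : α → ℝ} (hp : ∑ a, p a = 1) (n : ℕ) (f : α → E) :
    weightedVariance (fun ω : Fin n → α => ∏ i, p (ω i)) (fun ω => (n : ℝ)⁻¹ • ∑ i, f (ω i))
      = weightedVariance p f / n := by
  rw [weightedVariance_smul, weightedVariance_sum_apply (q := fun _ => p) (fun _ => hp),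
    sum_const, card_univ, Fintype.card_fin, nsmul_eq_mul]
  rcases eq_or_ne (n : ℝ) 0 with hn | hn
  · simp [hn]
  · field_simp

theorem gradient_variance_decomposition_general
    {H : Type*} [NormedAddCommGroup H] [InnerProductSpace ℝ H]
    {S Y : Type*} [Fintype S] [Fintype Y] [DecidableEq Y]
    (cl : S → Y)
    (g : S → H) (P : (y : Y) → {x // cl x = y} → ℝ)
    (hP : ∀ y x, 0 < P y x)
    (hPsum : ∀ y, ∑ x : {x // cl x = y}, P y x = 1)
    (b : Y → ℕ) :
    (∑ ω : (y : Y) → Fin (b y) → {x // cl x = y},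
        (∏ y, ∏ i, P y (ω y i)) *
        ‖∑ y, ((Fintype.card {x // cl x = y} : ℝ) / (Fintype.card S : ℝ)) •
            ((b y : ℝ)⁻¹ • ∑ i,
              ((Fintype.card {x // cl x = y} : ℝ) * P y (ω y i))⁻¹ • g (ω y i))‖ ^ 2)
      - ‖∑ ω : (y : Y) → Fin (b y) → {x // cl x = y},
          (∏ y, ∏ i, P y (ω y i)) •
          (∑ y, ((Fintype.card {x // cl x = y} : ℝ) / (Fintype.card S : ℝ)) •
            ((b y : ℝ)⁻¹ • ∑ i,
              ((Fintype.card {x // cl x = y} : ℝ) * P y (ω y i))⁻¹ • g (ω y i)))‖ ^ 2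
    = ∑ y, ((Fintype.card {x // cl x = y} : ℝ) ^ 2
            / ((Fintype.card S : ℝ) ^ 2 * (b y : ℝ))) *
        ((∑ x : {x // cl x = y},
            ‖g x‖ ^ 2 / ((Fintype.card {x // cl x = y} : ℝ) ^ 2 * P y x))
          - ‖(Fintype.card {x // cl x = y} : ℝ)⁻¹ • ∑ x : {x // cl x = y}, g x‖ ^ 2) := by
  calc _ = ∑ y, weightedVariance (fun ω : Fin (b y) → {x // cl x = y} => ∏ i, P y (ω i))
        fun ω => ((Fintype.card {x // cl x = y} : ℝ) / Fintype.card S) • ((b y : ℝ)⁻¹ •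
          ∑ i, ((Fintype.card {x // cl x = y} : ℝ) * P y (ω i))⁻¹ • g (ω i)) :=
      weightedVariance_sum_apply (fun y => sum_prod_eq_one fun _ => hPsum y) _
    _ = _ := sum_congr rfl fun y _ => by
      rw [weightedVariance_smul, weightedVariance_sampleMean (hPsum y) (b y)
        fun x => ((Fintype.card {x // cl x = y} : ℝ) * P y x)⁻¹ • g x,
        weightedVariance_inv_mul_smul fun x => (hP y x).ne']
      ring

/-- Theorem 2 (Gradient Variance Decomposition): the variance of the stratified
  importance-weighted batch gradient estimator decomposes as `∑_y α_y·(β_y - γ_y)`.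
The classes are the fibers of the class-label map `cl : S → Y` (surjective, so each
class is nonempty), and the family of samples is realized on the finite product space
`∀ y, Fin (b y) → {x // cl x = y}` with product law (mutual independence).
The variance of an `H`-valued random variable is `E[‖X‖²] - ‖E[X]‖²`. -/
theorem gradient_variance_decomposition
    {H : Type*} [NormedAddCommGroup H] [InnerProductSpace ℝ H]
    {S Y : Type*} [Fintype S] [Nonempty S] [Fintype Y] [DecidableEq Y]
    (cl : S → Y) (hcl : Function.Surjective cl)
    (g : S → H) (P : (y : Y) → {x // cl x = y} → ℝ)
    (hP : ∀ y x, 0 < P y x)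
    (hPsum : ∀ y, ∑ x : {x // cl x = y}, P y x = 1)
    (b : Y → ℕ) (hb : ∀ y, 1 ≤ b y) :
    (∑ ω : (y : Y) → Fin (b y) → {x // cl x = y},
        (∏ y, ∏ i, P y (ω y i)) *
        ‖∑ y, ((Fintype.card {x // cl x = y} : ℝ) / (Fintype.card S : ℝ)) •
            ((b y : ℝ)⁻¹ • ∑ i,
              ((Fintype.card {x // cl x = y} : ℝ) * P y (ω y i))⁻¹ • g (ω y i))‖ ^ 2)
      - ‖∑ ω : (y : Y) → Fin (b y) → {x // cl x = y},
          (∏ y, ∏ i, P y (ω y i)) •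
          (∑ y, ((Fintype.card {x // cl x = y} : ℝ) / (Fintype.card S : ℝ)) •
            ((b y : ℝ)⁻¹ • ∑ i,
              ((Fintype.card {x // cl x = y} : ℝ) * P y (ω y i))⁻¹ • g (ω y i)))‖ ^ 2
    = ∑ y, ((Fintype.card {x // cl x = y} : ℝ) ^ 2
            / ((Fintype.card S : ℝ) ^ 2 * (b y : ℝ))) *
        ((∑ x : {x // cl x = y},
            ‖g x‖ ^ 2 / ((Fintype.card {x // cl x = y} : ℝ) ^ 2 * P y x))
          - ‖(Fintype.card {x // cl x = y} : ℝ)⁻¹ • ∑ x : {x // cl x = y}, g x‖ ^ 2) :=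
  gradient_variance_decomposition_general cl g P hP hPsum b
end

section
/- Let H be a real inner product space, S a nonempty finite set partitioned into nonempty classes S_y for y in a finite set Y, and g : S → H with g(x) ≠ 0 for all x ∈ S. Set β*_y = ((1/|S_y|)·Σ_{x∈S_y} ‖g(x)‖)² and γ_y = ‖(1/|S_y|)·Σ_{x∈S_y} g(x)‖², and assume β*_y − γ_y > 0 for all y. Fix a total batch budget m > 0. Then over all choices of sampling distributions P_y on S_y and positive reals b_y with Σ_{y∈Y} b_y = m, the decomposed gradient variance Σ_{y∈Y} (|S_y|²/(|S|²·b_y))·(β_y(P_y) − γ_y), with β_y(P_y) = Σ_{x∈S_y} ‖g(x)‖²/(|S_y|²·P_y(x)), attains its minimum value (Σ_{y∈Y} |S_y|·√(β*_y − γ_y))²/(|S|²·m), and the minimum is achieved exactly when P_y(x) = ‖g(x)‖/Σ_{x'∈S_y} ‖g(x')‖ for every x ∈ S_y and b_y = m·|S_y|·√(β*_y − γ_y)/Σ_{y'∈Y} |S_{y'}|·√(β*_{y'} − γ_{y'}). -/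
open Finset

lemma cs_aux {ι : Type*} [Fintype ι] [Nonempty ι] (a p : ι → ℝ)
    (ha : ∀ i, 0 < a i) (hp : ∀ i, 0 < p i) :
    (∑ i, a i) ^ 2 / (∑ i, p i) ≤ ∑ i, (a i) ^ 2 / p i ∧
    ((∑ i, (a i) ^ 2 / p i) = (∑ i, a i) ^ 2 / (∑ i, p i) ↔
      ∀ i, p i = a i * (∑ j, p j) / (∑ j, a j)) := by
  have hT : 0 < ∑ i, a i := Finset.sum_pos (fun i _ => ha i) Finset.univ_nonempty
  have hQ : 0 < ∑ i, p i := Finset.sum_pos (fun i _ => hp i) Finset.univ_nonempty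
  set T := ∑ i, a i with hTdef
  set Q := ∑ i, p i with hQdef
  have key : (∑ i, (a i) ^ 2 / p i) - T ^ 2 / Q
      = ∑ i, (a i - (T / Q) * p i) ^ 2 / p i := by
    have e1 : ∀ i ∈ Finset.univ (α := ι), (a i - (T / Q) * p i) ^ 2 / p i
        = (a i) ^ 2 / p i - (2 * (T / Q)) * a i + (T / Q) ^ 2 * p i := by
      intro i _
      have hpi := (hp i).ne'
      field_simp
      ring
    rw [Finset.sum_congr rfl e1, Finset.sum_add_distrib, Finset.sum_sub_distrib,
      ← Finset.mul_sum, ← Finset.mul_sum, ← hTdef, ← hQdef]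
    field_simp
    ring
  have hnn : ∀ i ∈ Finset.univ (α := ι), 0 ≤ (a i - (T / Q) * p i) ^ 2 / p i :=
    fun i _ => div_nonneg (sq_nonneg _) (hp i).le
  have hsnn : 0 ≤ ∑ i, (a i - (T / Q) * p i) ^ 2 / p i := Finset.sum_nonneg hnn
  constructor
  · linarith
  · rw [← sub_eq_zero, key, Finset.sum_eq_zero_iff_of_nonneg hnn]
    refine forall_congr' fun i => ?_
    simp only [Finset.mem_univ, forall_true_left]
    rw [div_eq_zero_iff]
    constructor
    · rintro (h | h)
      · have h0 : a i - T / Q * p i = 0 := by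
          exact pow_eq_zero_iff (n := 2) (by norm_num) |>.mp h
        have ha' : a i = T / Q * p i := by linarith
        rw [ha']
        field_simp
      · exact absurd h (hp i).ne'
    · intro h
      left
      rw [h, sq_eq_zero_iff]
      field_simp
      ring

lemma combo {Y : Type*} [Fintype Y] [Nonempty Y]
    (β βs γ b n : Y → ℝ) (N m : ℝ)
    (hn : ∀ y, 0 < n y) (hN : 0 < N) (hm : 0 < m)
    (hb : ∀ y, 0 < b y) (hbsum : ∑ y, b y = m)
    (hd : ∀ y, 0 < βs y - γ y)
    (hβ : ∀ y, βs y ≤ β y) :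
    ((∑ y, n y * Real.sqrt (βs y - γ y)) ^ 2 / (N ^ 2 * m)
      ≤ ∑ y, (n y ^ 2 / (N ^ 2 * b y)) * (β y - γ y)) ∧
    ((∑ y, (n y ^ 2 / (N ^ 2 * b y)) * (β y - γ y)
       = (∑ y, n y * Real.sqrt (βs y - γ y)) ^ 2 / (N ^ 2 * m)) ↔
     ((∀ y, β y = βs y) ∧
      (∀ y, b y = m * n y * Real.sqrt (βs y - γ y)
          / ∑ y', n y' * Real.sqrt (βs y' - γ y')))) := by
  set a : Y → ℝ := fun y => n y * Real.sqrt (βs y - γ y) with haa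
  have hapos : ∀ y, 0 < a y :=
    fun y => mul_pos (hn y) (Real.sqrt_pos.mpr (hd y))
  have ha2 : ∀ y, a y ^ 2 = n y ^ 2 * (βs y - γ y) := fun y => by
    rw [haa]; simp only [mul_pow, Real.sq_sqrt (hd y).le]
  obtain ⟨h3, h4⟩ := cs_aux a b hapos hb
  rw [hbsum] at h3 h4
  have hdecomp : ∑ y, (n y ^ 2 / (N ^ 2 * b y)) * (β y - γ y)
      = (∑ y, a y ^ 2 / b y) / N ^ 2
        + ∑ y, (n y ^ 2 / (N ^ 2 * b y)) * (β y - βs y) := by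
    rw [Finset.sum_div, ← Finset.sum_add_distrib]
    refine Finset.sum_congr rfl fun y _ => ?_
    rw [ha2 y]
    have hb' := (hb y).ne'
    have hN' := hN.ne'
    field_simp
    ring
  have hbnd : (∑ y, a y) ^ 2 / (N ^ 2 * m) = ((∑ y, a y) ^ 2 / m) / N ^ 2 := by
    rw [div_div, mul_comm]
  have hgapD : ∀ y ∈ Finset.univ (α := Y),
      0 ≤ (n y ^ 2 / (N ^ 2 * b y)) * (β y - βs y) := fun y _ =>
    mul_nonneg (div_nonneg (sq_nonneg _) (mul_nonneg (sq_nonneg _) (hb y).le))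
      (sub_nonneg.mpr (hβ y))
  have hsumD : 0 ≤ ∑ y, (n y ^ 2 / (N ^ 2 * b y)) * (β y - βs y) :=
    Finset.sum_nonneg hgapD
  have hdiv : ((∑ y, a y) ^ 2 / m) / N ^ 2 ≤ (∑ y, a y ^ 2 / b y) / N ^ 2 := by
    gcongr
  have hbform : (∀ y, b y = a y * m / ∑ y', a y') ↔
      (∀ y, b y = m * n y * Real.sqrt (βs y - γ y) / ∑ y', a y') := by
    refine forall_congr' fun y => ?_
    simp only [haa]
    constructor <;> intro h <;> rw [h] <;> ring
  constructor
  · rw [hbnd, hdecomp]; linarith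
  · rw [hdecomp, hbnd]
    constructor
    · intro h
      have hgap2 : 0 ≤ (∑ y, a y ^ 2 / b y) / N ^ 2 - ((∑ y, a y) ^ 2 / m) / N ^ 2 := by
        linarith
      have hz1 : (∑ y, a y ^ 2 / b y) / N ^ 2 = ((∑ y, a y) ^ 2 / m) / N ^ 2 := by
        linarith
      have hz1' : (∑ y, a y ^ 2 / b y) = (∑ y, a y) ^ 2 / m :=
        by
          have hN2 : (N : ℝ) ^ 2 ≠ 0 := pow_ne_zero 2 hN.ne'
          exact (div_left_inj' hN2).mp hz1
      have hz2 : ∑ y, (n y ^ 2 / (N ^ 2 * b y)) * (β y - βs y) = 0 := by linarith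
      constructor
      · intro y
        have := (Finset.sum_eq_zero_iff_of_nonneg hgapD).mp hz2 y (Finset.mem_univ y)
        have hcoef : n y ^ 2 / (N ^ 2 * b y) ≠ 0 :=
          ne_of_gt (div_pos (pow_pos (hn y) 2) (mul_pos (pow_pos hN 2) (hb y)))
        have := (mul_eq_zero.mp this).resolve_left hcoef
        linarith
      · exact hbform.mp (h4.mp hz1')
    · rintro ⟨h1, h2⟩
      have hz2 : ∑ y, (n y ^ 2 / (N ^ 2 * b y)) * (β y - βs y) = 0 :=
        Finset.sum_eq_zero fun y _ => by rw [h1 y]; ring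
      have hz1 : (∑ y, a y ^ 2 / b y) = (∑ y, a y) ^ 2 / m :=
        h4.mpr (hbform.mpr h2)
      rw [hz1, hz2, add_zero]


/-- Lemma 2 (Optimal Batch-Level Selection): over all per-class sampling distributions
`P_y` and positive real batch sizes `b_y` summing to the budget `m`, the decomposed
gradient variance `∑_y (|S_y|²/(|S|²·b_y))·(β_y(P_y) - γ_y)` is at least
`(∑_y |S_y|·√(β*_y - γ_y))²/(|S|²·m)`, with equality exactly for the C-IS strategy:
`P_y(x) = ‖g(x)‖/∑_{x'∈S_y} ‖g(x')‖` and
`b_y = m·|S_y|·√(β*_y - γ_y)/∑_{y'} |S_{y'}|·√(β*_{y'} - γ_{y'})`.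
Classes are the fibers of the surjective class-label map `cl : S → Y`. -/
theorem optimal_batch_level_selection
    {H : Type*} [NormedAddCommGroup H] [InnerProductSpace ℝ H]
    {S Y : Type*} [Fintype S] [Nonempty S] [Fintype Y] [DecidableEq Y]
    (cl : S → Y) (hcl : Function.Surjective cl)
    (g : S → H) (hg : ∀ x, g x ≠ 0)
    (βstar γ : Y → ℝ)
    (hβstar : ∀ y, βstar y
      = ((Fintype.card {x // cl x = y} : ℝ)⁻¹ * ∑ x : {x // cl x = y}, ‖g x‖) ^ 2)
    (hγ : ∀ y, γ y
      = ‖(Fintype.card {x // cl x = y} : ℝ)⁻¹ • ∑ x : {x // cl x = y}, g x‖ ^ 2)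
    (hpos : ∀ y, 0 < βstar y - γ y)
    (m : ℝ) (hm : 0 < m) :
    ∀ (P : (y : Y) → {x // cl x = y} → ℝ) (b : Y → ℝ),
      (∀ y x, 0 < P y x) → (∀ y, ∑ x : {x // cl x = y}, P y x = 1) →
      (∀ y, 0 < b y) → (∑ y, b y = m) →
      ((∑ y, (Fintype.card {x // cl x = y} : ℝ) * Real.sqrt (βstar y - γ y)) ^ 2
          / ((Fintype.card S : ℝ) ^ 2 * m)
        ≤ ∑ y, ((Fintype.card {x // cl x = y} : ℝ) ^ 2
              / ((Fintype.card S : ℝ) ^ 2 * b y)) *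
            ((∑ x : {x // cl x = y},
                ‖g x‖ ^ 2 / ((Fintype.card {x // cl x = y} : ℝ) ^ 2 * P y x))
              - γ y)) ∧
      ((∑ y, ((Fintype.card {x // cl x = y} : ℝ) ^ 2
              / ((Fintype.card S : ℝ) ^ 2 * b y)) *
            ((∑ x : {x // cl x = y},
                ‖g x‖ ^ 2 / ((Fintype.card {x // cl x = y} : ℝ) ^ 2 * P y x))
              - γ y)
          = (∑ y, (Fintype.card {x // cl x = y} : ℝ) * Real.sqrt (βstar y - γ y)) ^ 2
              / ((Fintype.card S : ℝ) ^ 2 * m)) ↔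
        ((∀ y (x : {x // cl x = y}),
            P y x = ‖g x‖ / ∑ x' : {x // cl x = y}, ‖g x'‖) ∧
          (∀ y, b y = m * (Fintype.card {x // cl x = y} : ℝ)
                * Real.sqrt (βstar y - γ y)
              / ∑ y', (Fintype.card {x // cl x = y'} : ℝ)
                * Real.sqrt (βstar y' - γ y')))) := by
  intro P b hP hPsum hb hbsum
  have hNe : ∀ y, Nonempty {x // cl x = y} := fun y => by
    obtain ⟨x, hx⟩ := hcl y; exact ⟨⟨x, hx⟩⟩
  haveI : Nonempty Y := ⟨cl (Classical.arbitrary S)⟩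
  have hNpos : (0 : ℝ) < (Fintype.card S : ℝ) := by exact_mod_cast Fintype.card_pos
  have hnpos : ∀ y, (0 : ℝ) < (Fintype.card {x // cl x = y} : ℝ) := fun y => by
    haveI := hNe y; exact_mod_cast Fintype.card_pos
  have class_main : ∀ y,
      βstar y ≤ ∑ x : {x // cl x = y},
          ‖g x‖ ^ 2 / ((Fintype.card {x // cl x = y} : ℝ) ^ 2 * P y x) ∧
      ((∑ x : {x // cl x = y},
          ‖g x‖ ^ 2 / ((Fintype.card {x // cl x = y} : ℝ) ^ 2 * P y x)) = βstar y ↔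
        (∀ x : {x // cl x = y}, P y x = ‖g x‖ / ∑ x' : {x // cl x = y}, ‖g x'‖)) := by
    intro y
    haveI := hNe y
    obtain ⟨h1, h2⟩ := cs_aux (fun x : {x // cl x = y} => ‖g x‖) (P y)
      (fun x => norm_pos_iff.mpr (hg x)) (hP y)
    rw [hPsum y] at h1 h2
    rw [div_one] at h1 h2
    have hn2 : ((Fintype.card {x // cl x = y} : ℝ)) ^ 2 ≠ 0 :=
      pow_ne_zero 2 (hnpos y).ne'
    have hrw : ∑ x : {x // cl x = y},
        ‖g x‖ ^ 2 / ((Fintype.card {x // cl x = y} : ℝ) ^ 2 * P y x)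
        = (∑ x : {x // cl x = y}, ‖g x‖ ^ 2 / P y x)
            / (Fintype.card {x // cl x = y} : ℝ) ^ 2 := by
      rw [Finset.sum_div]
      exact Finset.sum_congr rfl fun x _ => by rw [div_div, mul_comm]
    have hβ : βstar y = (∑ x : {x // cl x = y}, ‖g x‖) ^ 2
        / (Fintype.card {x // cl x = y} : ℝ) ^ 2 := by
      rw [hβstar y, mul_pow, inv_pow, inv_mul_eq_div]
    constructor
    · rw [hβ, hrw]
      gcongr
    · rw [hβ, hrw, div_left_inj' hn2, h2]
      refine forall_congr' fun x => ?_
      rw [mul_one]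
  obtain ⟨hle, heq⟩ := combo
    (fun y => ∑ x : {x // cl x = y},
        ‖g x‖ ^ 2 / ((Fintype.card {x // cl x = y} : ℝ) ^ 2 * P y x))
    βstar γ b (fun y => (Fintype.card {x // cl x = y} : ℝ)) (Fintype.card S : ℝ) m
    hnpos hNpos hm hb hbsum hpos (fun y => (class_main y).1)
  exact ⟨hle, heq.trans
    (and_congr (forall_congr' fun y => (class_main y).2) Iff.rfl)⟩
end
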